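/- Let n > 6 be an integer and write n = 4q + r with r ∈ {0,1,2,3}. Among all partitions of n into parts ≥ 2, the value ∑_i C_{n_i} (with C_j = H_{j-1,1}^2/H_{j-1,2}) is maximized by: q parts of size 4 if r = 0; (q−r) parts of size 4 and r parts of size 5 if r ∈ {1,2}; q parts of size 4 and one part of size 3 if r = 3. -/

import Mathlib

/-!
For `n > 6` the proposed partition of `n` has value `foursBound n = ⌊n/4⌋ C₄ + remainderValue (n % 4)`,
and a finite check on residues shows that `foursBound` is superadditive. Hence
`∑ C_{nᵢ} ≤ ∑ foursBound nᵢ ≤ foursBound n` once `C x ≤ foursBound x` for every part `x ≥ 2`.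
That holds for `x ≤ 15` by computation, and beyond by induction from `C (x + 4) ≤ C x + C₄`:
the numerator `H_{x-1,1}²` grows by at most `2 H_{x+3,1} · 4/x`, which the linear bound
`H_{m,1} ≤ 3m/10 - 1` keeps below `C₄ = 121/49`, while the denominator `H_{x-1,2}` only grows.
-/

noncomputable def H (m j : ℕ) : ℝ := ∑ i ∈ Finset.Icc 1 m, (1 : ℝ) / (i : ℝ) ^ j

noncomputable def C (n : ℕ) : ℝ := (H (n - 1) 1) ^ 2 / H (n - 1) 2

def optimalPartition (q r : ℕ) : Multiset ℕ :=
  if r = 0 then Multiset.replicate q 4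
  else if r ≤ 2 then Multiset.replicate (q - r) 4 + Multiset.replicate r 5
  else Multiset.replicate q 4 + {3}

lemma H_succ (m j : ℕ) : H (m + 1) j = H m j + 1 / ((m : ℝ) + 1) ^ j := by
  rw [H, H, ← Finset.insert_Icc_right_eq_Icc_add_one (by omega), Finset.sum_insert (by simp)]
  push_cast
  ring

lemma H_eq_sum_range (m j : ℕ) : H m j = ∑ i ∈ Finset.range m, (1 : ℝ) / ((i : ℝ) + 1) ^ j := by
  induction m with
  | zero => simp [H]
  | succ m ih => rw [H_succ, ih, Finset.sum_range_succ]

lemma H_nonneg (m j : ℕ) : 0 ≤ H m j :=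
  Finset.sum_nonneg fun _ _ => by positivity

lemma H_mono (j : ℕ) : Monotone (H · j) := fun _ _ h =>
  Finset.sum_le_sum_of_subset_of_nonneg (Finset.Icc_subset_Icc_right h) fun _ _ _ => by positivity

lemma one_le_H {m : ℕ} (hm : 1 ≤ m) (j : ℕ) : 1 ≤ H m j :=
  calc (1 : ℝ) = H 1 j := by simp [H]
    _ ≤ H m j := H_mono j hm

lemma H_one_add_sub_le (k d : ℕ) : H (k + d) 1 - H k 1 ≤ d / ((k : ℝ) + 1) := by
  induction d with
  | zero => simp
  | succ d ih =>
    have hstep : 1 / ((k + d : ℕ) + 1 : ℝ) ≤ 1 / ((k : ℝ) + 1) :=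
      one_div_le_one_div_of_le (by positivity) (by simp)
    rw [← add_assoc, H_succ, pow_one]
    push_cast at hstep ⊢
    rw [add_div]
    linarith

lemma H_one_le_linear {m : ℕ} (hm : 15 ≤ m) : H m 1 ≤ 3 / 10 * m - 1 := by
  induction m, hm using Nat.le_induction with
  | base => rw [H_eq_sum_range]; norm_num [Finset.sum_range_succ]
  | succ m hm ih =>
    have hstep : 1 / ((m : ℝ) + 1) ≤ 3 / 10 := by
      rw [div_le_iff₀ (by positivity)]
      have : (15 : ℝ) ≤ m := by exact_mod_cast hm
      linarith
    rw [H_succ, pow_one]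
    push_cast
    linarith

lemma C_succ (k : ℕ) : C (k + 1) = H k 1 ^ 2 / H k 2 := rfl

lemma C_three : C 3 = 9 / 5 := by
  norm_num [C, H_eq_sum_range, Finset.sum_range_succ]

lemma C_four : C 4 = 121 / 49 := by
  norm_num [C, H_eq_sum_range, Finset.sum_range_succ]

lemma C_five : C 5 = 125 / 41 := by
  norm_num [C, H_eq_sum_range, Finset.sum_range_succ]

lemma sq_div_sub_sq_div_le {a b s t : ℝ} (ha : 0 ≤ a) (hab : a ≤ b) (hs : 1 ≤ s) (hst : s ≤ t) :
    b ^ 2 / t - a ^ 2 / s ≤ b ^ 2 - a ^ 2 := by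
  have hnum : a ^ 2 / t ≤ a ^ 2 / s := div_le_div_of_nonneg_left (by positivity) (by linarith) hst
  have hgap : (b ^ 2 - a ^ 2) / t ≤ b ^ 2 - a ^ 2 :=
    div_le_self (by nlinarith) (hs.trans hst)
  have hsplit : b ^ 2 / t = a ^ 2 / t + (b ^ 2 - a ^ 2) / t := by ring
  linarith

lemma C_add_four_le {k : ℕ} (hk : 11 ≤ k) : C (k + 5) ≤ C (k + 1) + C 4 := by
  set a := H k 1
  set b := H (k + 4) 1
  have hab : a ≤ b := H_mono 1 (by omega)
  have hgrowth : b - a ≤ 4 / ((k : ℝ) + 1) := by exact_mod_cast H_one_add_sub_le k 4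
  have hb : b ≤ 3 / 10 * ((k : ℝ) + 4) - 1 := by exact_mod_cast H_one_le_linear (m := k + 4) (by omega)
  have hsq : b ^ 2 - a ^ 2 ≤ 121 / 49 :=
    calc b ^ 2 - a ^ 2 = (b + a) * (b - a) := by ring
      _ ≤ 2 * b * (4 / ((k : ℝ) + 1)) :=
        mul_le_mul (by linarith) hgrowth (by linarith) (by linarith [H_nonneg k 1])
      _ ≤ 121 / 49 := by
        have hk' : (11 : ℝ) ≤ k := by exact_mod_cast hk
        rw [mul_div_assoc', div_le_div_iff₀ (by positivity) (by norm_num)]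
        linarith
  have hdiff := sq_div_sub_sq_div_le (H_nonneg k 1) hab (one_le_H (m := k) (by omega) 2)
    (H_mono 2 (show k ≤ k + 4 by omega))
  rw [C_succ, C_succ, C_four]
  linarith

noncomputable def remainderValue : ℕ → ℝ
  | 0 => 0
  | 1 => C 5 - C 4
  | 2 => 2 * (C 5 - C 4)
  | _ => C 3

noncomputable def foursBound (n : ℕ) : ℝ := (n / 4 : ℕ) * C 4 + remainderValue (n % 4)

lemma foursBound_eq {q r : ℕ} (hr : r < 4) : foursBound (4 * q + r) = q * C 4 + remainderValue r := by
  rw [foursBound, show (4 * q + r) / 4 = q by omega, show (4 * q + r) % 4 = r by omega]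

lemma foursBound_four : foursBound 4 = C 4 := by
  simpa [remainderValue] using foursBound_eq (q := 1) (r := 0) (by norm_num)

lemma foursBound_add_foursBound_le (a b : ℕ) : foursBound a + foursBound b ≤ foursBound (a + b) := by
  obtain ⟨qa, ra, hra, rfl⟩ : ∃ q r, r < 4 ∧ a = 4 * q + r := ⟨a / 4, a % 4, by omega, by omega⟩
  obtain ⟨qb, rb, hrb, rfl⟩ : ∃ q r, r < 4 ∧ b = 4 * q + r := ⟨b / 4, b % 4, by omega, by omega⟩
  rw [show 4 * qa + ra + (4 * qb + rb) = 4 * (qa + qb + (ra + rb) / 4) + (ra + rb) % 4 by omega,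
    foursBound_eq hra, foursBound_eq hrb, foursBound_eq (by omega)]
  push_cast
  interval_cases ra <;> interval_cases rb <;> norm_num [remainderValue, C_three, C_four, C_five] <;>
    linarith

lemma C_le_foursBound {x : ℕ} (hx : 2 ≤ x) : C x ≤ foursBound x := by
  induction x using Nat.strong_induction_on with
  | _ x ih =>
    by_cases hsmall : x < 16
    · interval_cases x <;>
        norm_num [foursBound, remainderValue, C, H_eq_sum_range, Finset.sum_range_succ]
    · obtain ⟨k, hk, rfl⟩ : ∃ k, 11 ≤ k ∧ x = k + 5 := ⟨x - 5, by omega, by omega⟩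
      calc C (k + 5) ≤ C (k + 1) + C 4 := C_add_four_le hk
        _ ≤ foursBound (k + 1) + foursBound 4 := by
          rw [foursBound_four]
          gcongr
          exact ih (k + 1) (by omega) (by omega)
        _ ≤ foursBound (k + 5) := foursBound_add_foursBound_le (k + 1) 4

lemma sum_map_C_le_foursBound_sum (l : Multiset ℕ) (hl : ∀ x ∈ l, 2 ≤ x) :
    (l.map C).sum ≤ foursBound l.sum := by
  induction l using Multiset.induction with
  | empty => simp [foursBound, remainderValue]
  | cons x s ih =>
    rw [Multiset.map_cons, Multiset.sum_cons, Multiset.sum_cons]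
    calc C x + (s.map C).sum ≤ foursBound x + foursBound s.sum :=
          add_le_add (C_le_foursBound (hl x (Multiset.mem_cons_self x s)))
            (ih fun y hy => hl y (Multiset.mem_cons_of_mem hy))
      _ ≤ foursBound (x + s.sum) := foursBound_add_foursBound_le x s.sum

lemma sum_map_C_optimalPartition {q r : ℕ} (hr : r < 4) (hq : r ≤ 2 → r ≤ q) :
    ((optimalPartition q r).map C).sum = foursBound (4 * q + r) := by
  rw [foursBound_eq hr]
  interval_cases r <;> simp [optimalPartition, remainderValue, Nat.cast_sub, hq] <;> ring

theorem rule_of_fours (n q r : ℕ) (hn : 6 < n) (hr : r < 4) (hqr : n = 4 * q + r)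
    (l : Multiset ℕ) (hl : ∀ x ∈ l, 2 ≤ x) (hsum : l.sum = n) :
    (l.map C).sum ≤ ((optimalPartition q r).map C).sum := by
  rw [sum_map_C_optimalPartition hr (by omega), ← hqr, ← hsum]
  exact sum_map_C_le_foursBound_sum l hl
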